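/- Let τ* achieve the maximum in the optimization max{c : c ≤ c̄_p(τ), τ a probability vector on {1,...,T} with mean t̄}, with optimal value c*. Then the (semi-)regular distribution τ_reg with mean t̄ is also feasible at c*, i.e., min_{x∈[0,1]} V_s(x; c*, τ_reg) ≥ 0. -/
import Mathlib


noncomputable def PsiEq (k : ℕ) (x : ℝ) : ℝ := x ^ k / (Nat.factorial k) * Real.exp (-x)

noncomputable def PoisL (t : ℕ) (x : ℝ) : ℝ :=
  ∑ k ∈ Finset.range t, PsiEq k x * ((t : ℝ) - (k : ℝ))

noncomputable def PoisLMix (T : ℕ) (τ : Fin T → ℝ) (y : ℝ) : ℝ :=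
  ∑ i : Fin T, τ i * PoisL (i + 1) y

noncomputable def VsMix (T : ℕ) (τ : Fin T → ℝ) (tbar c x : ℝ) : ℝ :=
  x ^ 2 / 2 - x + (tbar - PoisLMix T τ (c * x)) / c

/-- Potential threshold `c̄_p(τ)`. -/
noncomputable def cbarP (T : ℕ) (τ : Fin T → ℝ) (tbar : ℝ) : ℝ :=
  sSup {c : ℝ | 0 ≤ c ∧ ∀ x ∈ Set.Icc (0 : ℝ) 1, 0 ≤ VsMix T τ tbar c x}

/-- The (semi-)regular distribution with mean `tbar` (mass function on `ℕ`). -/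
noncomputable def tauReg (tbar : ℝ) (t : ℕ) : ℝ :=
  if t = ⌊tbar⌋₊ then 1 + (⌊tbar⌋₊ : ℝ) - tbar
  else if t = ⌊tbar⌋₊ + 1 then tbar - ⌊tbar⌋₊ else 0

noncomputable def PoisLReg (tbar : ℝ) (y : ℝ) : ℝ :=
  tauReg tbar ⌊tbar⌋₊ * PoisL ⌊tbar⌋₊ y + tauReg tbar (⌊tbar⌋₊ + 1) * PoisL (⌊tbar⌋₊ + 1) y

noncomputable def VsReg (tbar c x : ℝ) : ℝ :=
  x ^ 2 / 2 - x + (tbar - PoisLReg tbar (c * x)) / c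

/-! ### Auxiliary lemmas -/

/-- Poisson CDF: the increment of `PoisL` in its first argument. -/
noncomputable def DeltaL (y : ℝ) (s : ℕ) : ℝ := ∑ k ∈ Finset.range (s+1), PsiEq k y

lemma psi_nonneg (k : ℕ) {y : ℝ} (hy : 0 ≤ y) : 0 ≤ PsiEq k y :=
  mul_nonneg (div_nonneg (pow_nonneg hy k) (by positivity)) (Real.exp_nonneg _)

lemma poisL_nonneg (t : ℕ) {y : ℝ} (hy : 0 ≤ y) : 0 ≤ PoisL t y := by
  apply Finset.sum_nonneg
  intro k hk
  apply mul_nonneg (psi_nonneg k hy)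
  rw [Finset.mem_range] at hk
  have : (k : ℝ) < t := by exact_mod_cast hk
  linarith

lemma poisL_succ (t : ℕ) (y : ℝ) :
    PoisL (t+1) y = PoisL t y + DeltaL y t := by
  unfold PoisL DeltaL
  push_cast
  rw [Finset.sum_range_succ (f := fun k => PsiEq k y * (((t:ℕ)+1 : ℝ) - k)),
      Finset.sum_range_succ (f := fun k => PsiEq k y)]
  rw [Finset.sum_congr rfl (fun k _ => by ring :
    ∀ k ∈ Finset.range t, PsiEq k y * ((t:ℝ)+1 - k) = PsiEq k y * ((t:ℝ) - k) + PsiEq k y),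
    Finset.sum_add_distrib]
  ring

lemma deltaL_mono {y : ℝ} (hy : 0 ≤ y) {s s' : ℕ} (h : s ≤ s') : DeltaL y s ≤ DeltaL y s' := by
  apply Finset.sum_le_sum_of_subset_of_nonneg (Finset.range_subset_range.2 (by omega))
  intro k _ _
  exact psi_nonneg k hy

/-- Discrete chord inequality: since `t ↦ PoisL t y` has nondecreasing increments,
it lies above the line through `(m, PoisL m y)` with slope `DeltaL y m`. -/
lemma chord {y : ℝ} (hy : 0 ≤ y) (m t : ℕ) :
    PoisL m y + ((t : ℝ) - m) * DeltaL y m ≤ PoisL t y := by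
  rcases le_or_gt m t with h | h
  · induction t, h using Nat.le_induction with
    | base => simp
    | succ t ht ih =>
        rw [poisL_succ]
        have := deltaL_mono hy ht
        push_cast
        nlinarith
  · obtain ⟨d, hd⟩ : ∃ d, t + d = m := ⟨m - t, by omega⟩
    clear h
    induction d generalizing t with
    | zero => simp at hd; subst hd; simp
    | succ d ih =>
        have h1 := ih (t+1) (by omega)
        have h2 : PoisL (t+1) y = PoisL t y + DeltaL y t := poisL_succ t y
        have h3 : DeltaL y t ≤ DeltaL y m := deltaL_mono hy (by omega)
        push_cast at h1 ⊢
        nlinarith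

/-- The regular distribution minimizes the mixed Poisson loss among distributions
with mean `tbar`. -/
lemma reg_le_mix (T : ℕ) (tbar : ℝ) (τ : Fin T → ℝ)
    (hτ : ∀ i, 0 ≤ τ i) (hsum : ∑ i, τ i = 1)
    (hmean : ∑ i : Fin T, ((i : ℝ) + 1) * τ i = tbar)
    {y : ℝ} (hy : 0 ≤ y) : PoisLReg tbar y ≤ PoisLMix T τ y := by
  set m := ⌊tbar⌋₊ with hm
  have hreg : PoisLReg tbar y = PoisL m y + (tbar - m) * DeltaL y m := by
    unfold PoisLReg tauReg
    rw [if_pos rfl, if_neg (by omega), if_pos rfl, poisL_succ]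
    ring
  rw [hreg]
  have key : ∀ i : Fin T,
      τ i * (PoisL m y + (((i:ℝ) + 1) - m) * DeltaL y m) ≤ τ i * PoisL (i+1) y := by
    intro i
    apply mul_le_mul_of_nonneg_left _ (hτ i)
    have := chord hy m (i+1)
    push_cast at this ⊢
    linarith
  calc PoisL m y + (tbar - m) * DeltaL y m
      = ∑ i : Fin T, τ i * (PoisL m y + (((i:ℝ) + 1) - m) * DeltaL y m) := by
        rw [Finset.sum_congr rfl (fun i _ => by ring :
          ∀ i ∈ Finset.univ, τ i * (PoisL m y + (((i:ℝ) + 1) - m) * DeltaL y m)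
            = τ i * (PoisL m y - m * DeltaL y m) + ((i:ℝ)+1) * τ i * DeltaL y m),
          Finset.sum_add_distrib, ← Finset.sum_mul, ← Finset.sum_mul]
        rw [Finset.sum_congr rfl (fun i _ => rfl), hsum]
        rw [hmean]
        ring
    _ ≤ ∑ i : Fin T, τ i * PoisL (i+1) y := Finset.sum_le_sum (fun i _ => key i)
    _ = PoisLMix T τ y := rfl

lemma poisLMix_nonneg (T : ℕ) (τ : Fin T → ℝ) (hτ : ∀ i, 0 ≤ τ i) {y : ℝ} (hy : 0 ≤ y) :
    0 ≤ PoisLMix T τ y :=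
  Finset.sum_nonneg fun i _ => mul_nonneg (hτ i) (poisL_nonneg _ hy)

lemma poisLMix_cont (T : ℕ) (τ : Fin T → ℝ) : Continuous (PoisLMix T τ) := by
  unfold PoisLMix PoisL PsiEq
  fun_prop

theorem stmt_17 (T : ℕ) (tbar : ℝ) (htbar1 : 1 ≤ tbar)
    (τstar : Fin T → ℝ) (cstar : ℝ) (hcstar : 0 < cstar)
    (hτ : ∀ i, 0 ≤ τstar i) (hsum : ∑ i, τstar i = 1)
    (hmean : ∑ i : Fin T, ((i : ℝ) + 1) * τstar i = tbar)
    -- (cstar, τstar) is feasible for the optimization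
    (hfeas : cstar ≤ cbarP T τstar tbar)
    -- and optimal: no feasible pair beats cstar
    (hopt : ∀ c : ℝ, ∀ τ : Fin T → ℝ, (∀ i, 0 ≤ τ i) → (∑ i, τ i = 1) →
      (∑ i : Fin T, ((i : ℝ) + 1) * τ i = tbar) → c ≤ cbarP T τ tbar → c ≤ cstar) :
    ∀ x ∈ Set.Icc (0 : ℝ) 1, 0 ≤ VsReg tbar cstar x := by
  set S := {c : ℝ | 0 ≤ c ∧ ∀ x ∈ Set.Icc (0 : ℝ) 1, 0 ≤ VsMix T τstar tbar c x} with hS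
  have hcbar : cbarP T τstar tbar = sSup S := rfl
  -- S is bounded above
  have hbdd : BddAbove S := by
    refine ⟨2 * tbar, fun c hc => ?_⟩
    rcases le_or_gt c (2 * tbar) with h | h
    · exact h
    have hc0 : 0 < c := by linarith
    have h1 := hc.2 1 ⟨zero_le_one, le_refl 1⟩
    unfold VsMix at h1
    have hP : 0 ≤ PoisLMix T τstar (c * 1) := poisLMix_nonneg T τstar hτ (by linarith)
    have h2 : (tbar - PoisLMix T τstar (c * 1)) / c * c = tbar - PoisLMix T τstar (c * 1) :=
      div_mul_cancel₀ _ hc0.ne'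
    nlinarith [div_nonneg (sub_nonneg.2 (le_of_lt (by nlinarith : PoisLMix T τstar (c*1) < tbar))) hc0.le]
  -- S is nonempty
  have hne : S.Nonempty := by
    by_contra h
    rw [Set.not_nonempty_iff_eq_empty] at h
    rw [hcbar, h, Real.sSup_empty] at hfeas
    linarith
  -- cstar = sSup S by optimality
  have heq : sSup S = cstar :=
    le_antisymm (hopt _ τstar hτ hsum hmean (le_of_eq hcbar)) (hcbar ▸ hfeas)
  -- feasibility of τstar at cstar (by continuity in c at the supremum)
  have hMx : ∀ x ∈ Set.Icc (0 : ℝ) 1, 0 ≤ VsMix T τstar tbar cstar x := by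
    intro x hx
    by_contra h
    push_neg at h
    have hcont : ContinuousAt (fun c => VsMix T τstar tbar c x) cstar := by
      unfold VsMix
      apply ContinuousAt.add continuousAt_const
      exact ContinuousAt.div
        ((continuous_const.sub ((poisLMix_cont T τstar).comp
          (continuous_id.mul continuous_const))).continuousAt) continuousAt_id hcstar.ne'
    have hmem : {c : ℝ | VsMix T τstar tbar c x < 0} ∈ nhds cstar := hcont (Iio_mem_nhds h)
    obtain ⟨ε, hε, hball⟩ := Metric.mem_nhds_iff.1 hmem
    obtain ⟨c, hcS, hclt⟩ := exists_lt_of_lt_csSup hne (show cstar - ε < sSup S by rw [heq]; linarith)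
    have hcle : c ≤ cstar := heq ▸ le_csSup hbdd hcS
    have : c ∈ Metric.ball cstar ε := by
      rw [Metric.mem_ball, Real.dist_eq, abs_lt]
      constructor <;> linarith
    exact absurd (hcS.2 x hx) (not_le.2 (hball this))
  -- conclude via the regular-distribution comparison
  intro x hx
  have hy : 0 ≤ cstar * x := mul_nonneg hcstar.le hx.1
  have hcmp := reg_le_mix T tbar τstar hτ hsum hmean hy
  have h0 := hMx x hx
  unfold VsMix at h0
  unfold VsReg
  have : (tbar - PoisLMix T τstar (cstar * x)) / cstar ≤ (tbar - PoisLReg tbar (cstar * x)) / cstar := by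
    gcongr
  linarith
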